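/- Attractor recovery theorem: let B_i be an elementary block that is the single parent block of a non-elementary block B_j in a Boolean network, and let A^{B_i} and A^{B_j} range over the attractor sets of B_i and of B_j (the latter taken over all realisations). Then the set of attractors of the merged block B_{i,j} equals Π(𝒜^{B_i}, 𝒜^{B_j}) = { Π(A₁, A₂) : A₁ ∈ 𝒜^{B_i}, A₂ ∈ 𝒜^{B_j}, A₁ and A₂ crossable }, where Π combines crossable states by gluing them along the shared control nodes. -/
import Mathlib


open Classical

/-- Asynchronous transition of a Boolean network `f`: exactly one node `i` is
updated to `f i x`, all other nodes keep their value. -/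
def Step {V : Type*} (f : V → (V → Bool) → Bool) (x y : V → Bool) : Prop :=
  ∃ i, y i = f i x ∧ ∀ j, j ≠ i → y j = x j

/-- `g` depends only on the coordinates in `B`. -/
def DependsOnlyOn {V : Type*} (g : (V → Bool) → Bool) (B : Set V) : Prop :=
  ∀ x y : V → Bool, (∀ v ∈ B, x v = y v) → g x = g y

/-- An elementary block: a set of nodes that is parent-closed, i.e. the update
function of every node of `B` depends only on nodes of `B`. -/
def Elementary {V : Type*} (f : V → (V → Bool) → Bool) (B : Set V) : Prop :=
  ∀ i ∈ B, DependsOnlyOn (f i) B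

/-- Canonical representatives of block states: full states that are `false`
outside the block. -/
def ProjStates {V : Type*} (B : Set V) : Set (V → Bool) :=
  {x | ∀ v ∉ B, x v = false}

/-- Projection of a full state onto a block `B` (canonical representative). -/
noncomputable def proj {V : Type*} (B : Set V) (x : V → Bool) : V → Bool :=
  fun v => if v ∈ B then x v else false

/-- Asynchronous transition of the block `B` (on canonical block states):
exactly one node `i ∈ B` is updated according to its Boolean function. -/
def BStep {V : Type*} (f : V → (V → Bool) → Bool) (B : Set V) (x y : V → Bool) : Prop :=
  x ∈ ProjStates B ∧ y ∈ ProjStates B ∧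
    ∃ i ∈ B, y i = f i x ∧ ∀ j, j ≠ i → y j = x j

/-- An attractor of a transition relation `R`: a nonempty set of mutually
reachable states from which no outside state is reachable. -/
def IsAttractor {α : Type*} (R : α → α → Prop) (A : Set α) : Prop :=
  A.Nonempty ∧ (∀ x ∈ A, ∀ y ∈ A, Relation.ReflTransGen R x y) ∧
    ∀ x ∈ A, ∀ y, Relation.ReflTransGen R x y → y ∈ A

/-- An attractor of the block `B` of the Boolean network `f`. -/
def IsBlockAttr {V : Type*} (f : V → (V → Bool) → Bool) (B : Set V)
    (A : Set (V → Bool)) : Prop :=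
  A ⊆ ProjStates B ∧ IsAttractor (BStep f B) A

/-- Transition of the realisation of a block `B` (with control nodes `B ∩ P`)
with respect to an attractor `Ap` of its single elementary parent block `P`:
either a non-control node of `B` is updated by its Boolean function, or the
control nodes are updated by mimicking a transition inside `Ap`. -/
def RStep {V : Type*} (f : V → (V → Bool) → Bool) (P B : Set V)
    (Ap : Set (V → Bool)) (x y : V → Bool) : Prop :=
  x ∈ ProjStates B ∧ y ∈ ProjStates B ∧
    ((∃ i ∈ B, i ∉ P ∧ y i = f i x ∧ ∀ j, j ≠ i → y j = x j) ∨
      (∃ p ∈ Ap, ∃ q ∈ Ap, BStep f P p q ∧ (∀ v ∈ B ∩ P, x v = p v) ∧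
        (∀ v ∈ B ∩ P, y v = q v) ∧ ∀ v, v ∉ P → y v = x v))

/-- An attractor of the realisation of block `B` with respect to the attractor
`Ap` of its parent block `P`: an attractor of the realisation's transition
system, whose state space consists of block states of `B` crossable with states
of `Ap`. -/
def IsRealAttr {V : Type*} (f : V → (V → Bool) → Bool) (P B : Set V)
    (Ap : Set (V → Bool)) (C : Set (V → Bool)) : Prop :=
  C ⊆ ProjStates B ∧ (∀ x ∈ C, ∃ p ∈ Ap, ∀ v ∈ B ∩ P, x v = p v) ∧
    IsAttractor (RStep f P B Ap) C

/-- Two block states (of blocks `B₁`, `B₂`) are crossable if they agree on the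
shared nodes. -/
def StateCrossable {V : Type*} (B₁ B₂ : Set V) (x y : V → Bool) : Prop :=
  ∀ v ∈ B₁ ∩ B₂, x v = y v

/-- The cross (glue) of two crossable block states. -/
noncomputable def crossState {V : Type*} (B₁ B₂ : Set V) (x y : V → Bool) : V → Bool :=
  fun v => if v ∈ B₁ then x v else if v ∈ B₂ then y v else false

/-- Two sets of block states are crossable if every state of either set is
crossable with some state of the other. -/
def SetCrossable {V : Type*} (B₁ B₂ : Set V) (A₁ A₂ : Set (V → Bool)) : Prop :=
  (∀ x ∈ A₁, ∃ y ∈ A₂, StateCrossable B₁ B₂ x y) ∧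
    (∀ y ∈ A₂, ∃ x ∈ A₁, StateCrossable B₁ B₂ x y)

/-- The cross operation on two sets of block states. -/
def crossSet {V : Type*} (B₁ B₂ : Set V) (A₁ A₂ : Set (V → Bool)) :
    Set (V → Bool) :=
  {m | ∃ x ∈ A₁, ∃ y ∈ A₂, StateCrossable B₁ B₂ x y ∧ m = crossState B₁ B₂ x y}

/-- The cross operation on two families of attractors: cross all crossable
pairs. -/
def crossFam {V : Type*} (B₁ B₂ : Set V) (F₁ F₂ : Set (Set (V → Bool))) :
    Set (Set (V → Bool)) :=
  {M | ∃ A₁ ∈ F₁, ∃ A₂ ∈ F₂, SetCrossable B₁ B₂ A₁ A₂ ∧ M = crossSet B₁ B₂ A₁ A₂}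


section AttractorRecoveryAux

open Relation

variable {V : Type*}

lemma rtg_closure {α : Type*} {R : α → α → Prop} {X : Set α}
    (h : ∀ x ∈ X, ∀ y, R x y → y ∈ X) :
    ∀ x ∈ X, ∀ y, ReflTransGen R x y → y ∈ X := by
  intro x hx y hxy
  induction hxy with
  | refl => exact hx
  | tail h₁ h₂ ih => exact h _ ih _ h₂

lemma proj_mem (B : Set V) (x : V → Bool) : proj B x ∈ ProjStates B := by
  intro v hv; simp [proj, hv]

lemma proj_eq_on (B : Set V) (x : V → Bool) {v : V} (hv : v ∈ B) :
    proj B x v = x v := if_pos hv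

lemma liftP_step {f : V → (V → Bool) → Bool} {P B : Set V} (hP : Elementary f P)
    {u q : V → Bool} (hu : u ∈ ProjStates (P ∪ B))
    (h : BStep f P (proj P u) q) :
    ∃ u', BStep f (P ∪ B) u u' ∧ proj P u' = q ∧ (∀ v ∉ P, u' v = u v) ∧
      u' ∈ ProjStates (P ∪ B) := by
  obtain ⟨-, hq, i, hiP, hqi, hrest⟩ := h
  have hu' : (fun v => if v ∈ P then q v else u v) ∈ ProjStates (P ∪ B) := by
    intro v hv
    have hvP : v ∉ P := fun h => hv (Or.inl h)
    simp only [if_neg hvP]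
    exact hu v hv
  refine ⟨fun v => if v ∈ P then q v else u v, ⟨hu, hu', i, Or.inl hiP, ?_, ?_⟩, ?_, ?_, hu'⟩
  · simp only [if_pos hiP]
    rw [hqi]
    exact hP i hiP _ _ (fun v hv => proj_eq_on P u hv)
  · intro j hj
    by_cases hjP : j ∈ P
    · simp only [if_pos hjP]
      rw [hrest j hj]
      exact proj_eq_on P u hjP
    · simp only [if_neg hjP]
  · funext v
    by_cases hv : v ∈ P
    · simp [proj, hv]
    · simp only [proj, if_neg hv]
      exact (hq v hv).symm
  · intro v hv; simp only [if_neg hv]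

lemma liftP_path {f : V → (V → Bool) → Bool} {P B : Set V} (hP : Elementary f P)
    {u q : V → Bool} (hu : u ∈ ProjStates (P ∪ B))
    (h : ReflTransGen (BStep f P) (proj P u) q) :
    ∃ u', ReflTransGen (BStep f (P ∪ B)) u u' ∧ proj P u' = q ∧
      (∀ v ∉ P, u' v = u v) ∧ u' ∈ ProjStates (P ∪ B) := by
  induction h with
  | refl => exact ⟨u, ReflTransGen.refl, rfl, fun _ _ => rfl, hu⟩
  | tail h₁ h₂ ih =>
    obtain ⟨u₁, hpath, hproj, hoff, hu₁⟩ := ih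
    rw [← hproj] at h₂
    obtain ⟨u₂, hstep, hproj₂, hoff₂, hu₂⟩ := liftP_step hP hu₁ h₂
    exact ⟨u₂, hpath.tail hstep, hproj₂,
      fun v hv => (hoff₂ v hv).trans (hoff v hv), hu₂⟩

lemma projP_step {f : V → (V → Bool) → Bool} {P B : Set V} (hP : Elementary f P)
    {u u' : V → Bool} (h : BStep f (P ∪ B) u u') :
    ReflTransGen (BStep f P) (proj P u) (proj P u') := by
  obtain ⟨hu, hu', i, hi, hval, hrest⟩ := h
  by_cases hiP : i ∈ P
  · refine ReflTransGen.single ⟨proj_mem P u, proj_mem P u', i, hiP, ?_, ?_⟩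
    · rw [proj_eq_on P u' hiP, hval]
      exact hP i hiP _ _ (fun v hv => (proj_eq_on P u hv).symm)
    · intro j hj
      by_cases hjP : j ∈ P
      · rw [proj_eq_on P u' hjP, proj_eq_on P u hjP, hrest j hj]
      · simp [proj, hjP]
  · have heq : proj P u' = proj P u := by
      funext v
      by_cases hv : v ∈ P
      · rw [proj_eq_on P u' hv, proj_eq_on P u hv,
          hrest v (by rintro rfl; exact hiP hv)]
      · simp [proj, hv]
    rw [heq]

lemma projP_path {f : V → (V → Bool) → Bool} {P B : Set V} (hP : Elementary f P)
    {u u' : V → Bool} (h : ReflTransGen (BStep f (P ∪ B)) u u') :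
    ReflTransGen (BStep f P) (proj P u) (proj P u') := by
  induction h with
  | refl => exact ReflTransGen.refl
  | tail h₁ h₂ ih => exact ih.trans (projP_step hP h₂)

lemma projB_step {f : V → (V → Bool) → Bool} {P B : Set V} (hP : Elementary f P)
    (hB : ∀ i ∈ B, i ∉ P → DependsOnlyOn (f i) B)
    {A : Set (V → Bool)} {u u' : V → Bool}
    (hA : proj P u ∈ A) (hA' : proj P u' ∈ A)
    (h : BStep f (P ∪ B) u u') :
    ReflTransGen (RStep f P B A) (proj B u) (proj B u') := by
  obtain ⟨hu, hu', i, hi, hval, hrest⟩ := h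
  by_cases hiB : i ∈ B
  · by_cases hiP : i ∈ P
    · refine ReflTransGen.single ⟨proj_mem B u, proj_mem B u',
        Or.inr ⟨proj P u, hA, proj P u', hA', ?_, ?_, ?_, ?_⟩⟩
      · refine ⟨proj_mem P u, proj_mem P u', i, hiP, ?_, ?_⟩
        · rw [proj_eq_on P u' hiP, hval]
          exact hP i hiP _ _ (fun v hv => (proj_eq_on P u hv).symm)
        · intro j hj
          by_cases hjP : j ∈ P
          · rw [proj_eq_on P u' hjP, proj_eq_on P u hjP, hrest j hj]
          · simp [proj, hjP]
      · intro v hv; rw [proj_eq_on B u hv.1, proj_eq_on P u hv.2]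
      · intro v hv; rw [proj_eq_on B u' hv.1, proj_eq_on P u' hv.2]
      · intro v hvP
        by_cases hvB : v ∈ B
        · rw [proj_eq_on B u' hvB, proj_eq_on B u hvB,
            hrest v (by rintro rfl; exact hvP hiP)]
        · simp [proj, hvB]
    · refine ReflTransGen.single ⟨proj_mem B u, proj_mem B u',
        Or.inl ⟨i, hiB, hiP, ?_, ?_⟩⟩
      · rw [proj_eq_on B u' hiB, hval]
        exact hB i hiB hiP _ _ (fun v hv => (proj_eq_on B u hv).symm)
      · intro j hj
        by_cases hjB : j ∈ B
        · rw [proj_eq_on B u' hjB, proj_eq_on B u hjB, hrest j hj]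
        · simp [proj, hjB]
  · have heq : proj B u' = proj B u := by
      funext v
      by_cases hv : v ∈ B
      · rw [proj_eq_on B u' hv, proj_eq_on B u hv,
          hrest v (by rintro rfl; exact hiB hv)]
      · simp [proj, hv]
    rw [heq]

lemma projB_path {f : V → (V → Bool) → Bool} {P B : Set V} (hP : Elementary f P)
    (hB : ∀ i ∈ B, i ∉ P → DependsOnlyOn (f i) B)
    {A : Set (V → Bool)} {u u' : V → Bool}
    (hall : ∀ z, ReflTransGen (BStep f (P ∪ B)) u z → proj P z ∈ A)
    (h : ReflTransGen (BStep f (P ∪ B)) u u') :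
    ReflTransGen (RStep f P B A) (proj B u) (proj B u') := by
  induction h with
  | refl => exact ReflTransGen.refl
  | tail h₁ h₂ ih =>
    exact ih.trans (projB_step hP hB (hall _ h₁) (hall _ (h₁.tail h₂)) h₂)

/-- Glue a block state of `B` with a parent state on the control nodes. -/
noncomputable def glueC (P B : Set V) (c q : V → Bool) : V → Bool :=
  fun v => if v ∈ B then (if v ∈ P then q v else c v) else false

lemma glueC_self {P B : Set V} {c p : V → Bool} (hc : c ∈ ProjStates B)
    (hagree : ∀ v ∈ B ∩ P, c v = p v) : glueC P B c p = c := by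
  funext v
  by_cases hvB : v ∈ B
  · by_cases hvP : v ∈ P
    · simp only [glueC, if_pos hvB, if_pos hvP]
      exact (hagree v ⟨hvB, hvP⟩).symm
    · simp only [glueC, if_pos hvB, if_neg hvP]
  · simp only [glueC, if_neg hvB]
    exact (hc v hvB).symm

lemma glue_path {f : V → (V → Bool) → Bool} {P B : Set V} {A : Set (V → Bool)}
    (hA : IsAttractor (BStep f P) A)
    {c p q : V → Bool} (hc : c ∈ ProjStates B) (hp : p ∈ A) (hq : q ∈ A)
    (hagree : ∀ v ∈ B ∩ P, c v = p v) :
    ReflTransGen (RStep f P B A) c (glueC P B c q) := by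
  have hpath := hA.2.1 p hp q hq
  have main : ∀ r, ReflTransGen (BStep f P) p r →
      ReflTransGen (RStep f P B A) c (glueC P B c r) := by
    intro r hr
    induction hr with
    | refl => rw [glueC_self hc hagree]
    | @tail b r' h₁ h₂ ih =>
      refine ih.tail ?_
      have hbA : b ∈ A := hA.2.2 p hp b h₁
      have hr'A : r' ∈ A := hA.2.2 p hp r' (h₁.tail h₂)
      refine ⟨?_, ?_, Or.inr ⟨b, hbA, r', hr'A, h₂, ?_, ?_, ?_⟩⟩
      · intro v hv; simp [glueC, hv]
      · intro v hv; simp [glueC, hv]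
      · intro v hv; simp [glueC, hv.1, hv.2]
      · intro v hv; simp [glueC, hv.1, hv.2]
      · intro v hvP
        by_cases hvB : v ∈ B
        · simp [glueC, hvB, hvP]
        · simp [glueC, hvB]
  exact main q hpath

lemma glue_mem {f : V → (V → Bool) → Bool} {P B : Set V} {A C : Set (V → Bool)}
    (hA : IsBlockAttr f P A) (hC : IsRealAttr f P B A C)
    {c q : V → Bool} (hc : c ∈ C) (hq : q ∈ A) :
    glueC P B c q ∈ C := by
  obtain ⟨p, hp, hpc⟩ := hC.2.1 c hc
  exact hC.2.2.2.2 c hc _ (glue_path hA.2 (hC.1 hc) hp hq hpc)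

lemma liftR_step {f : V → (V → Bool) → Bool} {P B : Set V} (hP : Elementary f P)
    (hB : ∀ i ∈ B, i ∉ P → DependsOnlyOn (f i) B)
    {A : Set (V → Bool)} (hA : IsBlockAttr f P A)
    {u c' : V → Bool} (hu : u ∈ ProjStates (P ∪ B)) (hup : proj P u ∈ A)
    (h : RStep f P B A (proj B u) c') :
    ∃ u', ReflTransGen (BStep f (P ∪ B)) u u' ∧ proj B u' = c' ∧
      proj P u' ∈ A ∧ u' ∈ ProjStates (P ∪ B) := by
  obtain ⟨-, hc', hkind⟩ := h
  rcases hkind with ⟨i, hiB, hiP, hval, hrest⟩ | ⟨p, hp, q, hq, hpq, hxp, hyq, hoff⟩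
  · have hu' : (fun v => if v = i then f i u else u v) ∈ ProjStates (P ∪ B) := by
      intro v hv
      have : v ≠ i := by rintro rfl; exact hv (Or.inr hiB)
      simp only [if_neg this]
      exact hu v hv
    refine ⟨fun v => if v = i then f i u else u v,
      ReflTransGen.single ⟨hu, hu', i, Or.inr hiB, by simp, fun j hj => by
        simp only [if_neg hj]⟩, ?_, ?_, hu'⟩
    · funext v
      by_cases hvB : v ∈ B
      · rw [proj_eq_on B _ hvB]
        by_cases hvi : v = i
        · subst hvi
          simp only [if_pos rfl]
          rw [hval]
          exact hB v hvB hiP _ _ (fun w hw => (proj_eq_on B u hw).symm)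
        · simp only [if_neg hvi]
          rw [hrest v hvi, proj_eq_on B u hvB]
      · simp only [proj, if_neg hvB]
        exact (hc' v hvB).symm
    · have heq : proj P (fun v => if v = i then f i u else u v) = proj P u := by
        funext v
        by_cases hv : v ∈ P
        · rw [proj_eq_on P _ hv, proj_eq_on P u hv]
          have : v ≠ i := by rintro rfl; exact hiP hv
          simp only [if_neg this]
        · simp [proj, hv]
      rw [heq]; exact hup
  · have hpath : ReflTransGen (BStep f P) (proj P u) q :=
      (hA.2.2.1 _ hup p hp).tail hpq
    obtain ⟨u', hupath, hproj, hoffP, hu'⟩ := liftP_path hP hu hpath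
    have hqA : proj P u' ∈ A := by
      rw [hproj]; exact hA.2.2.2 p hp q (ReflTransGen.single hpq)
    refine ⟨u', hupath, ?_, hqA, hu'⟩
    funext v
    by_cases hvB : v ∈ B
    · rw [proj_eq_on B u' hvB]
      by_cases hvP : v ∈ P
      · have h1 : u' v = q v := by
          rw [← proj_eq_on P u' hvP, hproj]
        rw [h1, ← hyq v ⟨hvB, hvP⟩]
      · rw [hoffP v hvP, hoff v hvP, proj_eq_on B u hvB]
    · simp only [proj, if_neg hvB]
      exact (hc' v hvB).symm

lemma liftR_path {f : V → (V → Bool) → Bool} {P B : Set V} (hP : Elementary f P)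
    (hB : ∀ i ∈ B, i ∉ P → DependsOnlyOn (f i) B)
    {A : Set (V → Bool)} (hA : IsBlockAttr f P A)
    {u c' : V → Bool} (hu : u ∈ ProjStates (P ∪ B)) (hup : proj P u ∈ A)
    (h : ReflTransGen (RStep f P B A) (proj B u) c') :
    ∃ u', ReflTransGen (BStep f (P ∪ B)) u u' ∧ proj B u' = c' ∧
      proj P u' ∈ A ∧ u' ∈ ProjStates (P ∪ B) := by
  induction h with
  | refl => exact ⟨u, ReflTransGen.refl, rfl, hup, hu⟩
  | tail h₁ h₂ ih =>
    obtain ⟨u₁, hpath, hproj, hup₁, hu₁⟩ := ih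
    rw [← hproj] at h₂
    obtain ⟨u₂, hpath₂, hproj₂, hup₂, hu₂⟩ := liftR_step hP hB hA hu₁ hup₁ h₂
    exact ⟨u₂, hpath.trans hpath₂, hproj₂, hup₂, hu₂⟩

lemma real_transfer {f : V → (V → Bool) → Bool} {P B : Set V}
    {A' A₁ C : Set (V → Bool)}
    (hA' : IsBlockAttr f P A') (hA₁ : IsBlockAttr f P A₁)
    (hC : IsRealAttr f P B A' C) (hX : SetCrossable P B A₁ C) :
    IsRealAttr f P B A₁ C := by
  have hclose : ∀ y ∈ C, ∀ z, RStep f P B A₁ y z → z ∈ C := by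
    intro y hy z hz
    obtain ⟨hyB, hzB, hkind⟩ := hz
    rcases hkind with hfirst | ⟨p, hp, q, hq, hpq, hxp, hzq, hoff⟩
    · exact hC.2.2.2.2 y hy z (ReflTransGen.single ⟨hyB, hzB, Or.inl hfirst⟩)
    · obtain ⟨w, hw, hqw⟩ := hX.1 q hq
      obtain ⟨p', hp', hwp'⟩ := hC.2.1 w hw
      have hglue : glueC P B y p' ∈ C := glue_mem hA' hC hy hp'
      have heq : glueC P B y p' = z := by
        funext v
        by_cases hvB : v ∈ B
        · by_cases hvP : v ∈ P
          · simp only [glueC, if_pos hvB, if_pos hvP]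
            rw [← hwp' v ⟨hvB, hvP⟩, ← hqw v ⟨hvP, hvB⟩, hzq v ⟨hvB, hvP⟩]
          · simp only [glueC, if_pos hvB, if_neg hvP]
            exact (hoff v hvP).symm
        · simp only [glueC, if_neg hvB]
          exact (hzB v hvB).symm
      rwa [heq] at hglue
  have hconv : ∀ y ∈ C, ∀ z, RStep f P B A' y z →
      ReflTransGen (RStep f P B A₁) y z := by
    intro y hy z hz
    obtain ⟨hyB, hzB, hkind⟩ := hz
    rcases hkind with hfirst | ⟨p, hp, q, hq, hpq, hxp, hzq, hoff⟩
    · exact ReflTransGen.single ⟨hyB, hzB, Or.inl hfirst⟩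
    · have hzC : z ∈ C := hC.2.2.2.2 y hy z
        (ReflTransGen.single ⟨hyB, hzB, Or.inr ⟨p, hp, q, hq, hpq, hxp, hzq, hoff⟩⟩)
      obtain ⟨a, ha, hay⟩ := hX.2 y hy
      obtain ⟨a', ha', haz⟩ := hX.2 z hzC
      have hpath := glue_path (f := f) hA₁.2 hyB ha ha'
        (fun v hv => (hay v ⟨hv.2, hv.1⟩).symm)
      have heq : glueC P B y a' = z := by
        funext v
        by_cases hvB : v ∈ B
        · by_cases hvP : v ∈ P
          · simp only [glueC, if_pos hvB, if_pos hvP]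
            exact haz v ⟨hvP, hvB⟩
          · simp only [glueC, if_pos hvB, if_neg hvP]
            exact (hoff v hvP).symm
        · simp only [glueC, if_neg hvB]
          exact (hzB v hvB).symm
      rwa [heq] at hpath
  refine ⟨hC.1, ?_, hC.2.2.1, ?_, rtg_closure hclose⟩
  · intro x hx
    obtain ⟨a, ha, hax⟩ := hX.2 x hx
    exact ⟨a, ha, fun v hv => (hax v ⟨hv.2, hv.1⟩).symm⟩
  · intro x hx y hy
    have hpath := hC.2.2.2.1 x hx y hy
    clear hy
    induction hpath with
    | refl => exact ReflTransGen.refl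
    | tail h₁ h₂ ih =>
      have hb := hC.2.2.2.2 x hx _ h₁
      exact ih.trans (hconv _ hb _ h₂)

lemma crossSet_mem_iff {P B : Set V} {A C : Set (V → Bool)}
    (hA : A ⊆ ProjStates P) (hC : C ⊆ ProjStates B) {m : V → Bool} :
    m ∈ crossSet P B A C ↔
      m ∈ ProjStates (P ∪ B) ∧ proj P m ∈ A ∧ proj B m ∈ C := by
  constructor
  · rintro ⟨x, hx, y, hy, hxy, rfl⟩
    refine ⟨?_, ?_, ?_⟩
    · intro v hv
      have h1 : v ∉ P := fun h => hv (Or.inl h)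
      have h2 : v ∉ B := fun h => hv (Or.inr h)
      simp [crossState, h1, h2]
    · have heq : proj P (crossState P B x y) = x := by
        funext v
        by_cases hv : v ∈ P
        · simp [proj, crossState, hv]
        · simp only [proj, if_neg hv]
          exact (hA hx v hv).symm
      rw [heq]; exact hx
    · have heq : proj B (crossState P B x y) = y := by
        funext v
        by_cases hvB : v ∈ B
        · by_cases hvP : v ∈ P
          · simp only [proj, if_pos hvB, crossState, if_pos hvP]
            exact hxy v ⟨hvP, hvB⟩
          · simp [proj, crossState, hvB, hvP]
        · simp only [proj, if_neg hvB]
          exact (hC hy v hvB).symm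
      rw [heq]; exact hy
  · rintro ⟨hm, hPm, hBm⟩
    refine ⟨proj P m, hPm, proj B m, hBm, ?_, ?_⟩
    · intro v hv; rw [proj_eq_on P m hv.1, proj_eq_on B m hv.2]
    · funext v
      by_cases hvP : v ∈ P
      · simp [crossState, hvP, proj]
      · by_cases hvB : v ∈ B
        · simp [crossState, hvP, hvB, proj]
        · simp only [crossState, if_neg hvP, if_neg hvB]
          exact hm v (by rintro (h | h); exacts [hvP h, hvB h])

lemma cross_is_attr {f : V → (V → Bool) → Bool} {P B : Set V}
    (hP : Elementary f P) (hB : ∀ i ∈ B, i ∉ P → DependsOnlyOn (f i) B)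
    {A C : Set (V → Bool)} (hA : IsBlockAttr f P A) (hC : IsRealAttr f P B A C)
    (hX : SetCrossable P B A C) :
    IsBlockAttr f (P ∪ B) (crossSet P B A C) := by
  have hchar : ∀ m : V → Bool, m ∈ crossSet P B A C ↔
      m ∈ ProjStates (P ∪ B) ∧ proj P m ∈ A ∧ proj B m ∈ C :=
    fun m => crossSet_mem_iff hA.1 hC.1
  refine ⟨fun m hm => ((hchar m).1 hm).1, ?_, ?_, ?_⟩
  · obtain ⟨c, hc⟩ := hC.2.2.1
    obtain ⟨a, ha, hac⟩ := hX.2 c hc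
    exact ⟨crossState P B a c, a, ha, c, hc, hac, rfl⟩
  · intro m hm m' hm'
    obtain ⟨hmU, hmP, hmB⟩ := (hchar m).1 hm
    obtain ⟨hmU', hmP', hmB'⟩ := (hchar m').1 hm'
    obtain ⟨u, hupath, huB, huP, huU⟩ :=
      liftR_path hP hB hA hmU hmP (hC.2.2.2.1 _ hmB _ hmB')
    obtain ⟨u', hupath', huP', hoffP, huU'⟩ :=
      liftP_path hP huU (hA.2.2.1 _ huP _ hmP')
    have heq : u' = m' := by
      funext v
      by_cases hvP : v ∈ P
      · have h1 := congrFun huP' v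
        rwa [proj_eq_on P u' hvP, proj_eq_on P m' hvP] at h1
      · by_cases hvB : v ∈ B
        · have h1 := congrFun huB v
          rw [proj_eq_on B u hvB, proj_eq_on B m' hvB] at h1
          rw [hoffP v hvP, h1]
        · rw [hoffP v hvP, huU v (by rintro (h | h); exacts [hvP h, hvB h]),
            hmU' v (by rintro (h | h); exacts [hvP h, hvB h])]
    rw [← heq]
    exact hupath.trans hupath'
  · refine rtg_closure ?_
    intro m hm m₂ hstep
    obtain ⟨hmU, hmP, hmB⟩ := (hchar m).1 hm
    have hm₂U : m₂ ∈ ProjStates (P ∪ B) := hstep.2.1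
    have hm₂P : proj P m₂ ∈ A := hA.2.2.2 _ hmP _ (projP_step hP hstep)
    have hm₂B : proj B m₂ ∈ C :=
      hC.2.2.2.2 _ hmB _ (projB_step hP hB hmP hm₂P hstep)
    exact (hchar m₂).2 ⟨hm₂U, hm₂P, hm₂B⟩

lemma merged_attr_decompose {f : V → (V → Bool) → Bool} {P B : Set V}
    (hP : Elementary f P) (hB : ∀ i ∈ B, i ∉ P → DependsOnlyOn (f i) B)
    {M : Set (V → Bool)} (hM : IsBlockAttr f (P ∪ B) M) :
    ∃ A C : Set (V → Bool), IsBlockAttr f P A ∧ IsRealAttr f P B A C ∧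
      SetCrossable P B A C ∧ M = crossSet P B A C := by
  obtain ⟨hMU, hMne, hMconn, hMclose⟩ := hM
  set A := (proj P) '' M with hAdef
  set C := (proj B) '' M with hCdef
  have hAP : A ⊆ ProjStates P := by rintro a ⟨m, hm, rfl⟩; exact proj_mem P m
  have hAconn : ∀ a ∈ A, ∀ b ∈ A, ReflTransGen (BStep f P) a b := by
    rintro a ⟨m, hm, rfl⟩ b ⟨m', hm', rfl⟩
    exact projP_path hP (hMconn m hm m' hm')
  have hAclose : ∀ a ∈ A, ∀ q, ReflTransGen (BStep f P) a q → q ∈ A := by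
    rintro a ⟨m, hm, rfl⟩ q hq
    obtain ⟨u, hpath, hproj, -, -⟩ := liftP_path hP (hMU hm) hq
    exact ⟨u, hMclose m hm u hpath, hproj⟩
  have hA : IsBlockAttr f P A :=
    ⟨hAP, hMne.image _, hAconn, hAclose⟩
  have hCB : C ⊆ ProjStates B := by rintro c ⟨m, hm, rfl⟩; exact proj_mem B m
  have hctrl : ∀ y ∈ C, ∃ p ∈ A, ∀ v ∈ B ∩ P, y v = p v := by
    rintro y ⟨m, hm, rfl⟩
    exact ⟨proj P m, ⟨m, hm, rfl⟩,
      fun v hv => by rw [proj_eq_on B m hv.1, proj_eq_on P m hv.2]⟩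
  have hCconn : ∀ y ∈ C, ∀ z ∈ C, ReflTransGen (RStep f P B A) y z := by
    rintro y ⟨m, hm, rfl⟩ z ⟨m', hm', rfl⟩
    exact projB_path hP hB (fun w hw => ⟨w, hMclose m hm w hw, rfl⟩)
      (hMconn m hm m' hm')
  have hCclose1 : ∀ y ∈ C, ∀ z, RStep f P B A y z → z ∈ C := by
    rintro y ⟨m, hm, rfl⟩ z hz
    obtain ⟨u, hpath, hproj, -, -⟩ := liftR_step hP hB hA (hMU hm) ⟨m, hm, rfl⟩ hz
    exact ⟨u, hMclose m hm u hpath, hproj⟩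
  have hC : IsRealAttr f P B A C :=
    ⟨hCB, hctrl, hMne.image _, hCconn, rtg_closure hCclose1⟩
  have hX : SetCrossable P B A C := by
    constructor
    · rintro a ⟨m, hm, rfl⟩
      exact ⟨proj B m, ⟨m, hm, rfl⟩,
        fun v hv => by rw [proj_eq_on P m hv.1, proj_eq_on B m hv.2]⟩
    · rintro y ⟨m, hm, rfl⟩
      exact ⟨proj P m, ⟨m, hm, rfl⟩,
        fun v hv => by rw [proj_eq_on P m hv.1, proj_eq_on B m hv.2]⟩
  refine ⟨A, C, hA, hC, hX, ?_⟩
  ext m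
  rw [crossSet_mem_iff hAP hCB]
  constructor
  · intro hm; exact ⟨hMU hm, ⟨m, hm, rfl⟩, ⟨m, hm, rfl⟩⟩
  · rintro ⟨hmU, hmP, hmB⟩
    obtain ⟨z, hz, hzP⟩ := hmP
    have hpathC : ReflTransGen (RStep f P B A) (proj B z) (proj B m) :=
      hCconn _ ⟨z, hz, rfl⟩ _ hmB
    obtain ⟨u, hupath, huB, huP, huU⟩ :=
      liftR_path hP hB hA (hMU hz) ⟨z, hz, rfl⟩ hpathC
    have huM : u ∈ M := hMclose z hz u hupath
    have hmPA : proj P m ∈ A := ⟨z, hz, hzP⟩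
    have hpathA : ReflTransGen (BStep f P) (proj P u) (proj P m) :=
      hAconn _ ⟨u, huM, rfl⟩ _ hmPA
    obtain ⟨u', hupath', huP', hoffP, -⟩ := liftP_path hP huU hpathA
    have heq : u' = m := by
      funext v
      by_cases hvP : v ∈ P
      · have h1 := congrFun huP' v
        rwa [proj_eq_on P u' hvP, proj_eq_on P m hvP] at h1
      · by_cases hvB : v ∈ B
        · have h1 := congrFun huB v
          rw [proj_eq_on B u hvB, proj_eq_on B m hvB] at h1
          rw [hoffP v hvP, h1]
        · rw [hoffP v hvP, huU v (by rintro (h | h); exacts [hvP h, hvB h]),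
            hmU v (by rintro (h | h); exacts [hvP h, hvB h])]
    rw [← heq]
    exact hMclose u huM u' hupath'

end AttractorRecoveryAux

/-- Attractor recovery theorem: if `P` is an elementary block that is the single
parent of the non-elementary block `B` (all control nodes of `B` lie in `P`),
then the set of attractors of the merged block `P ∪ B` is exactly the cross of
the attractor family of `P` with the attractor family of `B` (the latter taken
over all realisations). -/
theorem attractor_recovery {V : Type*} [Fintype V]
    (f : V → (V → Bool) → Bool) (P B : Set V)
    (hP : Elementary f P) (hB : ∀ i ∈ B, i ∉ P → DependsOnlyOn (f i) B) :
    {M : Set (V → Bool) | IsBlockAttr f (P ∪ B) M} =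
      crossFam P B {A : Set (V → Bool) | IsBlockAttr f P A}
        {C : Set (V → Bool) | ∃ A : Set (V → Bool),
          IsBlockAttr f P A ∧ IsRealAttr f P B A C} := by
  ext M
  simp only [Set.mem_setOf_eq, crossFam]
  constructor
  · intro hM
    obtain ⟨A, C, hA, hC, hX, hMeq⟩ := merged_attr_decompose hP hB hM
    exact ⟨A, hA, C, ⟨A, hA, hC⟩, hX, hMeq⟩
  · rintro ⟨A₁, hA₁, C, ⟨A', hA', hC⟩, hX, rfl⟩
    exact cross_is_attr hP hB hA₁ (real_transfer hA' hA₁ hC hX) hX
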